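/- Let r ∈ ℚ_{>0} be such that S_r is atomic (i.e., r = 1 or n(r) > 1). Then the elasticity of S_r is accepted — that is, there exists x ∈ S_r with ρ(x) = ρ(S_r) — if and only if r ∈ ℕ or r < 1. -/

import Mathlib

open Finsupp
open scoped ENNReal

/-- The Puiseux monoid (rational cyclic semiring) `S_r`, the additive submonoid of `ℚ`
generated by the nonnegative powers of `r`. -/
def S (r : ℚ) : AddSubmonoid ℚ := AddSubmonoid.closure {x : ℚ | ∃ n : ℕ, x = r ^ n}

/-- A factorization of `x` over the powers of `r`: a finitely supported choice of
coefficients `α i` with `∑ α i * r ^ i = x`. -/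
def IsFactorization (r x : ℚ) (α : ℕ →₀ ℕ) : Prop :=
  (α.sum fun i c => (c : ℚ) * r ^ i) = x

/-- The length of a factorization. -/
def flen (α : ℕ →₀ ℕ) : ℕ := α.sum fun _ c => c

/-- The set of lengths of factorizations of `x` over the powers of `r`. -/
def lengthSet (r x : ℚ) : Set ℕ :=
  {t | ∃ α : ℕ →₀ ℕ, IsFactorization r x α ∧ flen α = t}

/-- An atom of `S_r`: a nonzero element that is not the sum of two nonzero elements. -/
def IsAtomS (r a : ℚ) : Prop :=
  a ∈ S r ∧ a ≠ 0 ∧ ¬ ∃ y z : ℚ, y ∈ S r ∧ z ∈ S r ∧ y ≠ 0 ∧ z ≠ 0 ∧ a = y + z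

/-- The set of lengths of `x` as sums of atoms of `S_r`. -/
def atomLengthSet (r x : ℚ) : Set ℕ :=
  {t | ∃ f : Fin t → ℚ, (∀ i, IsAtomS r (f i)) ∧ ∑ i, f i = x}

open Classical in
/-- The elasticity of `x` in `S_r` (as an extended nonnegative real). -/
noncomputable def elast (r x : ℚ) : ℝ≥0∞ :=
  if x = 0 then 1
  else if BddAbove (atomLengthSet r x) then
    (↑(sSup (atomLengthSet r x)) : ℝ≥0∞) / (↑(sInf (atomLengthSet r x)) : ℝ≥0∞)
  else ⊤

/-- The elasticity of the monoid `S_r`. -/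
noncomputable def elastM (r : ℚ) : ℝ≥0∞ := ⨆ x ∈ S r, elast r x

/-!
Write `r = n / d` in lowest terms. When `n, d ≥ 2` every power `r ^ k` is an atom: a relation
`r ^ k = ∑ cᵢ rⁱ` with `c_k = 0` gives an integer polynomial with coefficient `-1` at `k` and
nonnegative coefficients elsewhere that vanishes at `n / d`; by Gauss's lemma it is `(dX - n) q`,
and comparing coefficients forces `q` to have infinitely many negative coefficients.

For `r < 1` the trade `n • r ^ j = d • r ^ (j + 1)` adds `d - n` atoms and can be iterated, so
`L(n)` is unbounded and `ρ(n) = ∞ = ρ(S_r)`. For `r > 1` not an integer, atoms are `≥ 1`, so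
`L(x)` is bounded by `x` and every `ρ(x)` is finite, while `n ^ k • 1 = d ^ k • r ^ k` gives
`ρ(S_r) ≥ (n / d) ^ k` for all `k`. For `r ∈ ℕ` the monoid is `ℕ`, whose only atom is `1`.
-/

open Polynomial

lemma pow_mem_S (r : ℚ) (k : ℕ) : r ^ k ∈ S r :=
  AddSubmonoid.subset_closure ⟨k, rfl⟩

lemma natCast_mem_S (r : ℚ) (n : ℕ) : (n : ℚ) ∈ S r := by
  simpa using nsmul_mem (pow_mem_S r 0) n

lemma mem_S_iff {r x : ℚ} : x ∈ S r ↔ ∃ p : ℕ[X], aeval r p = x := by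
  constructor
  · intro hx
    induction hx using AddSubmonoid.closure_induction with
    | mem x h => obtain ⟨k, rfl⟩ := h; exact ⟨X ^ k, by simp⟩
    | zero => exact ⟨0, by simp⟩
    | add x y _ _ hx hy =>
      obtain ⟨p, rfl⟩ := hx
      obtain ⟨q, rfl⟩ := hy
      exact ⟨p + q, map_add _ _ _⟩
  · rintro ⟨p, rfl⟩
    induction p using Polynomial.induction_on' with
    | add p q hp hq => simpa using add_mem hp hq
    | monomial k c => simpa [← nsmul_eq_mul] using nsmul_mem (pow_mem_S r k) c

lemma nonneg_of_mem_S {r x : ℚ} (hr : 0 ≤ r) (hx : x ∈ S r) : 0 ≤ x := by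
  induction hx using AddSubmonoid.closure_induction with
  | mem x h => obtain ⟨k, rfl⟩ := h; positivity
  | zero => rfl
  | add x y _ _ hx hy => exact add_nonneg hx hy

lemma one_le_of_mem_S {r x : ℚ} (hr : 1 ≤ r) (hx : x ∈ S r) (hx0 : x ≠ 0) : 1 ≤ x := by
  induction hx using AddSubmonoid.closure_induction with
  | mem x h => obtain ⟨k, rfl⟩ := h; exact one_le_pow₀ hr
  | zero => exact absurd rfl hx0
  | add x y hxS hyS hx hy =>
    rcases eq_or_ne x 0 with rfl | hx'
    · simpa using hy (by simpa using hx0)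
    · linarith [hx hx', nonneg_of_mem_S (zero_le_one.trans hr) hyS]

lemma coeff_mul_pow_le_aeval {r : ℚ} (hr : 0 ≤ r) (p : ℕ[X]) (k : ℕ) :
    p.coeff k * r ^ k ≤ aeval r p := by
  conv_rhs => rw [← monomial_add_erase p k]
  have := nonneg_of_mem_S hr (mem_S_iff.mpr ⟨p.erase k, rfl⟩)
  simp only [map_add, aeval_monomial, eq_natCast]
  linarith

lemma not_C_mul_X_sub_C_dvd {n d : ℤ} (hn : 1 < n) (hd : 1 < d) {p : ℤ[X]} {k : ℕ}
    (hp : ∀ j ≠ k, 0 ≤ p.coeff j) (hpk : p.coeff k = -1) : ¬ C d * X - C n ∣ p := by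
  rintro ⟨q, rfl⟩
  have hcoeff_zero : ((C d * X - C n) * q).coeff 0 = -(n * q.coeff 0) := by
    simp [sub_mul, mul_assoc]
  have hcoeff_succ : ∀ j, ((C d * X - C n) * q).coeff (j + 1) =
      d * q.coeff j - n * q.coeff (j + 1) := by
    simp [sub_mul, mul_assoc, coeff_X_mul]
  have hn_ne_one : ∀ a, n * a ≠ 1 := fun a h => by
    have := Int.le_of_dvd one_pos ⟨a, h.symm⟩
    omega
  have hneg : ∀ j, q.coeff j ≤ 0 ∧ (k ≤ j → q.coeff j < 0) := by
    intro j
    induction j with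
    | zero =>
      rcases eq_or_ne k 0 with rfl | hk
      · exact absurd (by linarith [hcoeff_zero ▸ hpk]) (hn_ne_one (q.coeff 0))
      · have := hcoeff_zero ▸ hp 0 hk.symm
        exact ⟨by nlinarith, by omega⟩
    | succ j ih =>
      have hj := hcoeff_succ j
      rcases eq_or_ne k (j + 1) with rfl | hk
      · have hq : q.coeff j ≠ 0 := fun h0 =>
          hn_ne_one (q.coeff (j + 1)) (by rw [h0] at hj; linarith)
        have hqj : q.coeff j < 0 := lt_of_le_of_ne ih.1 hq
        have : q.coeff (j + 1) < 0 := by nlinarith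
        exact ⟨this.le, fun _ => this⟩
      · have := hj ▸ hp (j + 1) hk.symm
        refine ⟨by nlinarith [ih.1], fun hkj => ?_⟩
        nlinarith [ih.2 (by omega)]
  have := (hneg (q.natDegree + k + 1)).2 (by omega)
  rw [coeff_eq_zero_of_natDegree_lt (by omega)] at this
  exact this.false

lemma isPrimitive_den_mul_X_sub_num (r : ℚ) : (C (r.den : ℤ) * X - C r.num).IsPrimitive := by
  intro c hc
  rw [C_dvd_iff_dvd_coeff] at hc
  have hden := hc 1
  have hnum := hc 0
  simp only [coeff_sub, coeff_C_mul_X, coeff_C, if_true, if_false, one_ne_zero] at hden hnum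
  exact (Rat.isCoprime_num_den r).isUnit_of_dvd' (by simpa using hnum) (by simpa using hden)

lemma aeval_ne_pow_of_coeff_eq_zero {r : ℚ} (hn : 1 < r.num) (hd : 1 < r.den) {F : ℕ[X]}
    {k : ℕ} (hF : F.coeff k = 0) : aeval r F ≠ r ^ k := by
  intro hFk
  set p : ℤ[X] := F.map (algebraMap ℕ ℤ) - X ^ k
  have hpk : p.coeff k = -1 := by simp [p, hF]
  have hp : ∀ j ≠ k, 0 ≤ p.coeff j := by intro j hj; simp [p, coeff_X_pow, hj]
  have hroot : (p.map (algebraMap ℤ ℚ)).IsRoot r := by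
    rw [IsRoot.def, eval_map_algebraMap, map_sub, aeval_map_algebraMap, hFk, map_pow, aeval_X,
      sub_self]
  have hmap : (C (r.den : ℤ) * X - C r.num).map (algebraMap ℤ ℚ) = C (r.den : ℚ) * (X - C r) := by
    have hr : (r.den : ℚ) * r = r.num := by rw [mul_comm, Rat.mul_den_eq_num]
    rw [Polynomial.map_sub, Polynomial.map_mul, map_C, map_C, map_X, mul_sub, ← C_mul, eq_intCast,
      eq_intCast, Int.cast_natCast, hr]
  have hdvd : (C (r.den : ℤ) * X - C r.num).map (algebraMap ℤ ℚ) ∣ p.map (algebraMap ℤ ℚ) := by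
    rw [hmap, (isUnit_C.mpr (Ne.isUnit (by positivity))).mul_left_dvd]
    exact dvd_iff_isRoot.mpr hroot
  exact not_C_mul_X_sub_C_dvd hn (by exact_mod_cast hd) hp hpk
    ((isPrimitive_den_mul_X_sub_num r).dvd_of_fraction_map_dvd_fraction_map hdvd)

lemma isAtomS_pow {r : ℚ} (hn : 1 < r.num) (hd : 1 < r.den) (k : ℕ) : IsAtomS r (r ^ k) := by
  have hr : 0 < r := Rat.num_pos.mp (by omega)
  refine ⟨pow_mem_S r k, (pow_pos hr k).ne', ?_⟩
  rintro ⟨y, z, hy, hz, hy0, hz0, hyz⟩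
  obtain ⟨P, rfl⟩ := mem_S_iff.mp hy
  obtain ⟨Q, rfl⟩ := mem_S_iff.mp hz
  have hPpos := (nonneg_of_mem_S hr.le hy).lt_of_ne' hy0
  have hQpos := (nonneg_of_mem_S hr.le hz).lt_of_ne' hz0
  have hcoeff_zero : ∀ (A B : ℕ[X]), 0 < aeval r B → r ^ k = aeval r A + aeval r B →
      A.coeff k = 0 := fun A B hB hAB => by
    by_contra hA
    have := coeff_mul_pow_le_aeval hr.le A k
    have : (1 : ℚ) ≤ A.coeff k := by exact_mod_cast Nat.one_le_iff_ne_zero.mpr hA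
    nlinarith [pow_pos hr k]
  refine aeval_ne_pow_of_coeff_eq_zero hn hd (F := P + Q) ?_ (by rw [map_add, hyz])
  rw [coeff_add, hcoeff_zero P Q hQpos hyz, hcoeff_zero Q P hPpos (by rw [hyz, add_comm])]

lemma zero_notMem_atomLengthSet {r x : ℚ} (hx : x ≠ 0) : 0 ∉ atomLengthSet r x := by
  rintro ⟨f, -, hf⟩
  exact hx (by simpa using hf.symm)

lemma nsmul_mem_atomLengthSet {r a : ℚ} (ha : IsAtomS r a) (c : ℕ) :
    c ∈ atomLengthSet r (c • a) :=
  ⟨fun _ => a, fun _ => ha, by simp⟩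

lemma add_mem_atomLengthSet {r x y : ℚ} {s t : ℕ} (hs : s ∈ atomLengthSet r x)
    (ht : t ∈ atomLengthSet r y) : s + t ∈ atomLengthSet r (x + y) := by
  obtain ⟨f, hf, rfl⟩ := hs
  obtain ⟨g, hg, rfl⟩ := ht
  refine ⟨Fin.append f g, fun i => ?_, by simp [Fin.sum_univ_add]⟩
  induction i using Fin.addCases <;> simp [hf, hg]

lemma bddAbove_atomLengthSet {r x : ℚ} (hr : 1 ≤ r) : BddAbove (atomLengthSet r x) := by
  refine ⟨⌈x⌉₊, ?_⟩
  rintro t ⟨f, hf, rfl⟩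
  have : (t : ℚ) ≤ ∑ i, f i := by
    simpa using Finset.sum_le_sum fun i (_ : i ∈ Finset.univ) =>
      one_le_of_mem_S hr (hf i).1 (hf i).2.1
  exact Nat.cast_le.mp (this.trans (Nat.le_ceil _))

lemma S_natCast_le_mrange (m : ℕ) : S m ≤ AddMonoidHom.mrange (Nat.castAddMonoidHom ℚ) :=
  AddSubmonoid.closure_le.mpr fun _ ⟨k, hk⟩ => ⟨m ^ k, by simp [hk]⟩

lemma IsAtomS.eq_one_of_natCast {m : ℕ} {a : ℚ} (ha : IsAtomS m a) : a = 1 := by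
  obtain ⟨haS, ha0, hirr⟩ := ha
  obtain ⟨N, rfl⟩ := S_natCast_le_mrange m haS
  by_contra h1
  have hN : 2 ≤ N := by simp at ha0 h1; omega
  refine hirr ⟨1, (N - 1 : ℕ), by simpa using natCast_mem_S m 1, natCast_mem_S m _, one_ne_zero,
    by simp; omega, ?_⟩
  simp [Nat.cast_sub (by omega : 1 ≤ N)]

lemma natCast_eq_of_mem_atomLengthSet {m : ℕ} {x : ℚ} {t : ℕ} (ht : t ∈ atomLengthSet m x) :
    (t : ℚ) = x := by
  obtain ⟨f, hf, rfl⟩ := ht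
  simp [fun i => (hf i).eq_one_of_natCast]

lemma elast_zero (r : ℚ) : elast r 0 = 1 := if_pos rfl

lemma elast_le_one_of_subsingleton {r x : ℚ} (h : (atomLengthSet r x).Subsingleton) :
    elast r x ≤ 1 := by
  unfold elast
  split_ifs with hx hbdd
  · rfl
  · rcases h.eq_empty_or_singleton with he | ⟨t, he⟩ <;> simp [he, ENNReal.div_self_le_one]
  · exact absurd h.finite.bddAbove hbdd

lemma div_le_elast {r x : ℚ} (hx : x ≠ 0) (hbdd : BddAbove (atomLengthSet r x)) {s t : ℕ}
    (hs : s ∈ atomLengthSet r x) (ht : t ∈ atomLengthSet r x) : (s : ℝ≥0∞) / t ≤ elast r x := by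
  rw [elast, if_neg hx, if_pos hbdd]
  exact ENNReal.div_le_div (Nat.cast_le.mpr (le_csSup hbdd hs)) (Nat.cast_le.mpr (Nat.sInf_le ht))

lemma elast_ne_top_of_bddAbove {r x : ℚ} (hbdd : BddAbove (atomLengthSet r x)) :
    elast r x ≠ ⊤ := by
  unfold elast
  split_ifs with hx
  · exact ENNReal.one_ne_top
  · rcases (atomLengthSet r x).eq_empty_or_nonempty with he | hne
    · simp [he]
    · refine ENNReal.div_ne_top (ENNReal.natCast_ne_top _) (Nat.cast_ne_zero.mpr fun h0 => ?_)
      exact zero_notMem_atomLengthSet hx (h0 ▸ Nat.sInf_mem hne)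

lemma elast_eq_top_of_not_bddAbove {r x : ℚ} (hx : x ≠ 0)
    (h : ¬ BddAbove (atomLengthSet r x)) : elast r x = ⊤ := by
  rw [elast, if_neg hx, if_neg h]

lemma elast_le_elastM {r x : ℚ} (hx : x ∈ S r) : elast r x ≤ elastM r :=
  le_biSup (elast r) hx

lemma elastM_natCast (m : ℕ) : elastM m = 1 := by
  refine le_antisymm (iSup₂_le fun x _ => elast_le_one_of_subsingleton ?_) ?_
  · intro s hs t ht
    exact_mod_cast (natCast_eq_of_mem_atomLengthSet hs).trans
      (natCast_eq_of_mem_atomLengthSet ht).symm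
  · simpa [elast_zero] using elast_le_elastM (S (m : ℚ)).zero_mem

lemma exists_num_eq_natCast {r : ℚ} (hn : 0 < r.num) : ∃ n : ℕ, r.num = n ∧ r * r.den = n := by
  obtain ⟨n, hn_eq⟩ := Int.eq_ofNat_of_zero_le hn.le
  exact ⟨n, hn_eq, by rw [Rat.mul_den_eq_num, hn_eq, Int.cast_natCast]⟩

lemma one_lt_den_of_not_natCast {r : ℚ} (hr : 0 < r) (h : ∀ m : ℕ, r ≠ m) : 1 < r.den := by
  refine lt_of_le_of_ne r.den_pos fun hd => ?_
  obtain ⟨n, hn, -⟩ := exists_num_eq_natCast (Rat.num_pos.mpr hr)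
  exact h n (by rw [← (Rat.den_eq_one_iff r).mp hd.symm, hn, Int.cast_natCast])

lemma exists_elast_eq_top_of_lt_one {r : ℚ} (hn : 1 < r.num) (hr : r < 1) :
    ∃ x ∈ S r, elast r x = ⊤ := by
  have hnd : r.num < r.den := Rat.num_lt_denom_iff.mpr hr
  have hd : 1 < r.den := by omega
  obtain ⟨n, hn_eq, hrn⟩ := exists_num_eq_natCast (r := r) (by omega)
  obtain ⟨c, hc⟩ : ∃ c, r.den = n + c + 1 := Nat.exists_eq_add_of_lt (by omega)
  have htrade : ∀ j, (n : ℚ) * r ^ j = r.den • r ^ (j + 1) := fun j => by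
    rw [nsmul_eq_mul, ← hrn, pow_succ]; ring
  have hlen : ∀ k j, (c + 1) * k + r.den ∈ atomLengthSet r (n * r ^ j) := by
    intro k
    induction k with
    | zero => intro j; simpa [htrade] using nsmul_mem_atomLengthSet (isAtomS_pow hn hd (j + 1)) _
    | succ k ih =>
      intro j
      have hsplit : (n : ℚ) * r ^ j = (c + 1) • r ^ (j + 1) + n * r ^ (j + 1) := by
        rw [htrade, hc]; push_cast [nsmul_eq_mul]; ring
      rw [hsplit, show (c + 1) * (k + 1) + r.den = (c + 1) + ((c + 1) * k + r.den) by ring]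
      exact add_mem_atomLengthSet
        (nsmul_mem_atomLengthSet (isAtomS_pow hn hd (j + 1)) (c + 1)) (ih (j + 1))
  refine ⟨n, natCast_mem_S r n, elast_eq_top_of_not_bddAbove (by simp; omega) ?_⟩
  rintro ⟨B, hB⟩
  have := hB (by simpa using hlen B 0)
  nlinarith

lemma elastM_eq_top_of_one_lt {r : ℚ} (hd : 1 < r.den) (hr : 1 < r) : elastM r = ⊤ := by
  have hr0 : (0 : ℚ) < r := by linarith
  obtain ⟨n, hn_eq, hrn⟩ := exists_num_eq_natCast (Rat.num_pos.mpr hr0)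
  have hnd : r.den < n := by
    have : (r.den : ℚ) < n := by
      rw [← hrn]
      nlinarith [(Nat.cast_pos.mpr r.den_pos : (0 : ℚ) < r.den)]
    exact_mod_cast this
  have hn : 1 < r.num := by omega
  by_contra hne
  obtain ⟨N, hN⟩ := ENNReal.exists_nat_gt hne
  obtain ⟨k, hk⟩ := pow_unbounded_of_one_lt (N : ℚ) hr
  have hx : ((n ^ k : ℕ) : ℚ) ≠ 0 := by simp; omega
  have hones : n ^ k ∈ atomLengthSet r (n ^ k : ℕ) := by
    simpa using nsmul_mem_atomLengthSet (isAtomS_pow hn hd 0) (n ^ k)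
  have hpows : r.den ^ k ∈ atomLengthSet r (n ^ k : ℕ) := by
    simpa [← mul_pow, mul_comm _ r, hrn] using
      nsmul_mem_atomLengthSet (isAtomS_pow hn hd k) (r.den ^ k)
  have hNk : N * r.den ^ k ≤ n ^ k := by
    have : (N : ℚ) * r.den ^ k ≤ n ^ k := by
      rw [← hrn, mul_pow]; gcongr
    exact_mod_cast this
  refine hN.not_ge ?_
  calc (N : ℝ≥0∞)
    _ ≤ ((n ^ k : ℕ) : ℝ≥0∞) / ((r.den ^ k : ℕ) : ℝ≥0∞) := by
      rw [ENNReal.le_div_iff_mul_le (by simp) (by simp)]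
      exact_mod_cast hNk
    _ ≤ elast r (n ^ k : ℕ) := div_le_elast hx (bddAbove_atomLengthSet hr.le) hones hpows
    _ ≤ elastM r := elast_le_elastM (natCast_mem_S r _)

theorem stmt6_general (r : ℚ) (hat : r = 1 ∨ 1 < r.num) :
    (∃ x ∈ S r, elast r x = elastM r) ↔ ((∃ m : ℕ, r = m) ∨ r < 1) := by
  constructor
  · rintro ⟨x, hx, hxM⟩
    by_contra! ⟨hnat, hr⟩
    have hr1 : 1 < r := lt_of_le_of_ne hr fun h => hnat 1 (by simp [h])
    have hd := one_lt_den_of_not_natCast (by linarith) hnat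
    exact elast_ne_top_of_bddAbove (bddAbove_atomLengthSet hr)
      (hxM.trans (elastM_eq_top_of_one_lt hd hr1))
  · rintro (⟨m, rfl⟩ | hr)
    · exact ⟨0, zero_mem _, by rw [elast_zero, elastM_natCast]⟩
    · obtain ⟨x, hx, htop⟩ := exists_elast_eq_top_of_lt_one (hat.resolve_left hr.ne) hr
      exact ⟨x, hx, htop.trans (top_unique (htop ▸ elast_le_elastM hx)).symm⟩

theorem stmt6 (r : ℚ) (h0 : 0 < r) (hat : r = 1 ∨ 1 < r.num) :
    (∃ x ∈ S r, elast r x = elastM r) ↔ ((∃ m : ℕ, r = m) ∨ r < 1) :=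
  stmt6_general r hat
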